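/- arXiv:1504.04875 — 11 statements merged into one kernel-verified Lean document; each statement's English description precedes it below -/
import Mathlib

section
/- Let R be a commutative ring with identity and let a ∈ R. Then the image of a in the localization R_a is contained in the Jacobson radical J(R_a). -/
open Matrix

/-- A commutative ring `T` has stable range 1: whenever `cT + dT = T`,
there exists `y` with `c + d*y` a unit. -/
def StableRange1 (T : Type) [CommRing T] : Prop :=
  ∀ c d : T, IsCoprime c d → ∃ y : T, IsUnit (c + d * y)

/-- The multiplicative set `S_a = { b | aR + bR = R }`. -/
def Sa (R : Type) [CommRing R] (a : R) : Submonoid R where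
  carrier := {x | IsCoprime a x}
  one_mem' := isCoprime_one_right
  mul_mem' := fun hb hc => IsCoprime.mul_right hb hc

/-- `R` is locally stable: whenever `aR + bR = R` there is `y` such that
`R/(a+by)R` has stable range 1. -/
def LocallyStable (R : Type) [CommRing R] : Prop :=
  ∀ a b : R, IsCoprime a b → ∃ y : R,
    StableRange1 (R ⧸ Ideal.span ({a + b * y} : Set R))

/-- `c` is an adequate element. -/
def Adequate {R : Type} [CommRing R] (c : R) : Prop :=
  ∀ a : R, ∃ r s : R, c = r * s ∧ IsCoprime r a ∧
    ∀ s' : R, s' ∣ s → ¬ IsUnit s' → ¬ IsCoprime s' a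

/-- A ring is clean if every element is the sum of an idempotent and a unit. -/
def IsCleanRing (T : Type) [CommRing T] : Prop :=
  ∀ x : T, ∃ e u : T, IsIdempotentElem e ∧ IsUnit u ∧ x = e + u

/-- A ring is VNL if for every `x`, `x` or `1 - x` is von Neumann regular. -/
def IsVNLRing (T : Type) [CommRing T] : Prop :=
  ∀ x : T, (∃ y : T, x = x * y * x) ∨ (∃ y : T, (1 - x) = (1 - x) * y * (1 - x))

/-- `R` has almost stable range 1: every proper homomorphic image has stable range 1. -/
def AlmostStableRange1 (R : Type) [CommRing R] : Prop :=
  ∀ I : Ideal R, I ≠ ⊥ → StableRange1 (R ⧸ I)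

/-- `R` has adequate range 1. -/
def AdequateRange1 (R : Type) [CommRing R] : Prop :=
  ∀ a b : R, IsCoprime a b → ∃ y : R, Adequate (a + b * y)

/-- A (rectangular) matrix admits diagonal reduction. -/
def DiagonalReduction {R : Type} [CommRing R] {m n : ℕ}
    (A : Matrix (Fin m) (Fin n) R) : Prop :=
  ∃ (P : Matrix (Fin m) (Fin m) R) (Q : Matrix (Fin n) (Fin n) R),
    IsUnit P ∧ IsUnit Q ∧
    (∀ (i : Fin m) (j : Fin n), (i : ℕ) ≠ (j : ℕ) → (P * A * Q) i j = 0) ∧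
    (∀ (i i' : Fin m) (j j' : Fin n), (i : ℕ) = (j : ℕ) → (i' : ℕ) = (j' : ℕ) →
      (i : ℕ) + 1 = (i' : ℕ) → (P * A * Q) i j ∣ (P * A * Q) i' j')

/-- `R` is an elementary divisor ring. -/
def ElementaryDivisorRing (R : Type) [CommRing R] : Prop :=
  ∀ (m n : ℕ) (A : Matrix (Fin m) (Fin n) R), DiagonalReduction A

/-- `GE n R` : the subgroup of `GL n R` generated by elementary matrices. -/
def GE (n : ℕ) (R : Type) [CommRing R] : Subgroup (GL (Fin n) R) :=
  Subgroup.closure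
    { M | ∃ t : Matrix.TransvectionStruct (Fin n) R,
        (M : Matrix (Fin n) (Fin n) R) = t.toMatrix }

theorem Sa.add_mul_mem {R : Type} [CommRing R] {a s : R} (hs : s ∈ Sa R a) (r : R) :
    s + a * r ∈ Sa R a :=
  IsCoprime.add_mul_left_right hs r

theorem IsLocalization.algebraMap_mem_jacobson_bot_of_add_mul_mem {R S : Type*} [CommRing R]
    [CommRing S] [Algebra R S] {M : Submonoid R} [IsLocalization M S] {a : R}
    (hM : ∀ s ∈ M, ∀ r, s + a * r ∈ M) :
    algebraMap R S a ∈ (⊥ : Ideal S).jacobson := by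
  rw [Ideal.mem_jacobson_bot]
  intro y
  obtain ⟨⟨r, s⟩, rfl⟩ := IsLocalization.mk'_surjective M y
  have hmul : algebraMap R S s * (algebraMap R S a * IsLocalization.mk' S r s + 1) =
      algebraMap R S (s + a * r) := by
    rw [mul_add, mul_left_comm, IsLocalization.mk'_spec', mul_one, map_add, map_mul, add_comm]
  refine isUnit_of_mul_isUnit_right (x := algebraMap R S s) ?_
  rw [hmul]
  exact IsLocalization.map_units S (⟨_, hM s s.2 r⟩ : M)

/-- The image of `a` in the localization `R_a = S_a⁻¹R` lies in the Jacobson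
radical of `R_a`. -/
theorem stmt_0 (R : Type) [CommRing R] (a : R) :
    algebraMap R (Localization (Sa R a)) a ∈
      Ideal.jacobson (⊥ : Ideal (Localization (Sa R a))) :=
  IsLocalization.algebraMap_mem_jacobson_bot_of_add_mul_mem fun _ hs r => Sa.add_mul_mem hs r
end

section
/- Let R be a commutative ring and let a ∈ R be nonzero. Then the localization R_a = S_a^{-1}R has stable range 1 if and only if the quotient ring R/aR has stable range 1. -/
open Matrix

/-!
Every `s ∈ S_a` becomes a unit modulo `a`, so reduction modulo `a` extends to a surjection
`R_a → R/aR`. Its kernel consists of multiples of `a`, and `a` lies in the Jacobson radical of `R_a`: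
for `t = r/s` one has `1 + a t = (s + a r)/s`, and `s + a r` is again coprime to `a`. Hence the
surjection reflects units. Stable range 1 passes to every quotient, and conversely lifts along a
surjection reflecting units: solve the problem for the images and lift the witness.
-/

theorem StableRange1.of_surjective {T T' : Type} [CommRing T] [CommRing T'] {f : T →+* T'}
    (hf : Function.Surjective f) (h : StableRange1 T) : StableRange1 T' := by
  intro c' d' hcd
  obtain ⟨c, rfl⟩ := hf c'
  obtain ⟨d, rfl⟩ := hf d'
  obtain ⟨u', v', huv⟩ := hcd
  obtain ⟨u, rfl⟩ := hf u'
  obtain ⟨v, rfl⟩ := hf v'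
  -- `c, d` need not be coprime in `T`; adding the kernel element `k` to `d v` makes them so.
  set k := 1 - (u * c + v * d)
  have hk : f k = 0 := by simp only [k, map_sub, map_add, map_mul, map_one, huv, sub_self]
  obtain ⟨y, hy⟩ := h c (d * v + k) ⟨u, 1, by ring⟩
  refine ⟨f v * f y, ?_⟩
  convert hy.map f using 1
  simp only [map_add, map_mul, hk]
  ring

theorem StableRange1.of_surjective_of_isLocalHom {T T' : Type} [CommRing T] [CommRing T']
    {f : T →+* T'} [IsLocalHom f] (hf : Function.Surjective f) (h : StableRange1 T') :
    StableRange1 T := by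
  intro c d hcd
  obtain ⟨y', hy'⟩ := h (f c) (f d) (hcd.map f)
  obtain ⟨y, rfl⟩ := hf y'
  refine ⟨y, (isUnit_map_iff f _).mp ?_⟩
  simpa only [map_add, map_mul] using hy'

theorem isLocalHom_of_surjective_of_ker_le_jacobson {T T' : Type} [CommRing T] [CommRing T']
    {f : T →+* T'} (hf : Function.Surjective f) (hker : RingHom.ker f ≤ Ideal.jacobson ⊥) :
    IsLocalHom f := by
  refine ⟨fun x hx => ?_⟩
  obtain ⟨w, hw⟩ := isUnit_iff_exists_inv.mp hx
  obtain ⟨z, rfl⟩ := hf w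
  have hxz : x * z - 1 ∈ Ideal.jacobson ⊥ :=
    hker (by rw [RingHom.mem_ker, map_sub, map_mul, hw, map_one, sub_self])
  exact isUnit_of_mul_isUnit_left (Ideal.isUnit_of_sub_one_mem_jacobson_bot _ hxz)

namespace Sa

variable {R : Type} [CommRing R] (a : R)

theorem isUnit_mk (s : Sa R a) : IsUnit (Ideal.Quotient.mk (Ideal.span {a}) (s : R)) := by
  obtain ⟨u, v, huv⟩ := s.2
  refine IsUnit.of_mul_eq_one (Ideal.Quotient.mk _ v) ?_
  rw [← map_mul, ← map_one (Ideal.Quotient.mk _), Ideal.Quotient.eq, Ideal.mem_span_singleton']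
  exact ⟨-u, by linear_combination -huv⟩

noncomputable def toQuotient : Localization (Sa R a) →+* R ⧸ Ideal.span {a} :=
  IsLocalization.lift (isUnit_mk a)

theorem toQuotient_algebraMap (r : R) :
    toQuotient a (algebraMap R (Localization (Sa R a)) r) = Ideal.Quotient.mk _ r :=
  IsLocalization.lift_eq _ r

theorem toQuotient_surjective : Function.Surjective (toQuotient a) := by
  intro x
  obtain ⟨r, rfl⟩ := Ideal.Quotient.mk_surjective x
  exact ⟨_, toQuotient_algebraMap a r⟩

theorem algebraMap_mem_jacobson :
    algebraMap R (Localization (Sa R a)) a ∈ Ideal.jacobson ⊥ := by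
  rw [Ideal.mem_jacobson_bot]
  intro t
  obtain ⟨⟨r, s⟩, rfl⟩ := IsLocalization.mk'_surjective (Sa R a) t
  have hmem : (s : R) + a * r ∈ Sa R a := (s.2 : IsCoprime a s).add_mul_left_right r
  have hmul : (algebraMap R _ a * IsLocalization.mk' (Localization (Sa R a)) r s + 1) *
      algebraMap R _ s = algebraMap R _ ((s : R) + a * r) := by
    rw [map_add, map_mul]
    linear_combination algebraMap R (Localization (Sa R a)) a *
      IsLocalization.mk'_spec (Localization (Sa R a)) r s
  exact isUnit_of_mul_isUnit_left
    (hmul ▸ IsLocalization.map_units (Localization (Sa R a)) ⟨_, hmem⟩)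

theorem ker_toQuotient_le_jacobson : RingHom.ker (toQuotient a) ≤ Ideal.jacobson ⊥ := by
  intro x hx
  obtain ⟨⟨r, s⟩, hrs⟩ := IsLocalization.surj (Sa R a) x
  have hr : r ∈ Ideal.span {a} := by
    rw [← Ideal.Quotient.eq_zero_iff_mem, ← toQuotient_algebraMap, ← hrs, map_mul,
      RingHom.mem_ker.mp hx, zero_mul]
  obtain ⟨c, rfl⟩ := Ideal.mem_span_singleton'.mp hr
  rw [← Ideal.mul_unit_mem_iff_mem _ (IsLocalization.map_units _ s), hrs, map_mul]
  exact Ideal.mul_mem_left _ _ (algebraMap_mem_jacobson a)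

instance isLocalHom_toQuotient : IsLocalHom (toQuotient a) :=
  isLocalHom_of_surjective_of_ker_le_jacobson (toQuotient_surjective a)
    (ker_toQuotient_le_jacobson a)

end Sa

theorem stmt_2_general (R : Type) [CommRing R] (a : R) :
    StableRange1 (Localization (Sa R a)) ↔
      StableRange1 (R ⧸ Ideal.span ({a} : Set R)) :=
  ⟨StableRange1.of_surjective (Sa.toQuotient_surjective a),
    StableRange1.of_surjective_of_isLocalHom (Sa.toQuotient_surjective a)⟩

/-- For `a ≠ 0`, the localization `R_a` has stable range 1 iff `R/aR` has stable range 1. -/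
theorem stmt_2 (R : Type) [CommRing R] (a : R) (ha : a ≠ 0) :
    StableRange1 (Localization (Sa R a)) ↔
      StableRange1 (R ⧸ Ideal.span ({a} : Set R)) :=
  stmt_2_general R a
end

section
/- A commutative ring R is locally stable if and only if for all a, b ∈ R with aR + bR = R there exists y ∈ R such that R/(a+by)R has stable range 1. -/
open Matrix

/- A ring of stable range 1 passes the property to its quotients, and conversely the property
lifts along a surjection that reflects units. For `w : R`, every element of `S_w` is a unit
modulo `w`, so `R → R/wR` factors through a surjection `R_{S_w} → R/wR`; it reflects units
because `r/s` maps to a unit exactly when `r` is a unit modulo `w`, i.e. when `r ∈ S_w`. Hence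
`R_{S_w}` has stable range 1 iff `R/wR` does, for every `w`. -/

namespace StableRange1

variable {A B : Type} [CommRing A] [CommRing B]

theorem of_surjective_s3 (f : A →+* B) (hf : Function.Surjective f) (h : StableRange1 A) :
    StableRange1 B := by
  intro c d ⟨u, v, huv⟩
  obtain ⟨c, rfl⟩ := hf c
  obtain ⟨d, rfl⟩ := hf d
  obtain ⟨u, rfl⟩ := hf u
  obtain ⟨v, rfl⟩ := hf v
  -- `c, d` need not be coprime in `A`, but `c` and `v * d + (1 - (u * c + v * d))` are,
  -- and the second one maps to `f v * f d`.
  obtain ⟨y, hy⟩ := h c (v * d + (1 - (u * c + v * d))) ⟨u, 1, by ring⟩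
  refine ⟨f v * f y, ?_⟩
  convert hy.map f using 1
  simp only [map_add, map_mul, map_sub, map_one]
  linear_combination f y * huv

theorem of_surjective_of_isLocalHom_s3 (f : A →+* B) (hf : Function.Surjective f) [IsLocalHom f]
    (h : StableRange1 B) : StableRange1 A := by
  intro c d hcd
  obtain ⟨y, hy⟩ := h (f c) (f d) (hcd.map f)
  obtain ⟨y, rfl⟩ := hf y
  exact ⟨y, isUnit_of_map_unit f _ (by simpa only [map_add, map_mul] using hy)⟩

theorem iff_of_surjective_of_isLocalHom (f : A →+* B) (hf : Function.Surjective f)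
    [IsLocalHom f] : StableRange1 A ↔ StableRange1 B :=
  ⟨of_surjective_s3 f hf, of_surjective_of_isLocalHom_s3 f hf⟩

end StableRange1

section QuotientSpanSingleton

variable {R : Type} [CommRing R]

theorem isUnit_mk_span_singleton_iff {w s : R} :
    IsUnit (Ideal.Quotient.mk (Ideal.span {w}) s) ↔ IsCoprime w s := by
  refine ⟨fun hs => ?_, fun ⟨x, y, hxy⟩ => ?_⟩
  · obtain ⟨z, hz⟩ := isUnit_iff_exists_inv.mp hs
    obtain ⟨z, rfl⟩ := Ideal.Quotient.mk_surjective z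
    rw [← map_mul, ← map_one (Ideal.Quotient.mk _), Ideal.Quotient.eq,
      Ideal.mem_span_singleton] at hz
    obtain ⟨t, ht⟩ := hz
    exact ⟨-t, z, by linear_combination ht⟩
  · refine IsUnit.of_mul_eq_one (Ideal.Quotient.mk _ y) ?_
    rw [← map_mul, ← map_one (Ideal.Quotient.mk _), Ideal.Quotient.eq,
      Ideal.mem_span_singleton]
    exact ⟨-x, by linear_combination hxy⟩

variable (R) in
theorem isUnit_mk_of_mem_Sa (w : R) (s : Sa R w) :
    IsUnit (Ideal.Quotient.mk (Ideal.span {w}) (s : R)) :=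
  isUnit_mk_span_singleton_iff.mpr s.2

noncomputable abbrev localizationSaToQuotient (w : R) :
    Localization (Sa R w) →+* R ⧸ Ideal.span {w} :=
  IsLocalization.lift (S := Localization (Sa R w)) (isUnit_mk_of_mem_Sa R w)

theorem localizationSaToQuotient_surjective (w : R) :
    Function.Surjective (localizationSaToQuotient w) := by
  intro x
  obtain ⟨r, rfl⟩ := Ideal.Quotient.mk_surjective x
  exact ⟨algebraMap R _ r, IsLocalization.lift_eq _ r⟩

instance isLocalHom_localizationSaToQuotient (w : R) :
    IsLocalHom (localizationSaToQuotient w) := by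
  refine ⟨fun x hx => ?_⟩
  obtain ⟨⟨r, s⟩, rfl⟩ := IsLocalization.mk'_surjective (Sa R w) x
  have hr : IsUnit (Ideal.Quotient.mk (Ideal.span {w}) r) := by
    rw [(IsLocalization.lift_mk'_spec (S := Localization (Sa R w))
      (isUnit_mk_of_mem_Sa R w) r _ s).mp rfl]
    exact (isUnit_mk_of_mem_Sa R w s).mul hx
  exact IsUnit.of_mul_eq_one _
    (IsLocalization.mk'_mul_mk'_eq_one (M := Sa R w) ⟨r, isUnit_mk_span_singleton_iff.mp hr⟩ s)

theorem stableRange1_localization_Sa_iff (w : R) :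
    StableRange1 (Localization (Sa R w)) ↔ StableRange1 (R ⧸ Ideal.span {w}) :=
  StableRange1.iff_of_surjective_of_isLocalHom _ (localizationSaToQuotient_surjective w)

end QuotientSpanSingleton

/-- `R` is locally stable (localizations `R_{a+by}` of stable range 1) iff for all
coprime `a, b` there is `y` with `R/(a+by)R` of stable range 1. -/
theorem stmt_3 (R : Type) [CommRing R] :
    (∀ a b : R, IsCoprime a b → ∃ y : R,
        StableRange1 (Localization (Sa R (a + b * y)))) ↔
    (∀ a b : R, IsCoprime a b → ∃ y : R,
        StableRange1 (R ⧸ Ideal.span ({a + b * y} : Set R))) := by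
  simp only [stableRange1_localization_Sa_iff]
end

section
/- Every commutative ring having almost stable range 1 is locally stable. -/
open Matrix

/-- Every commutative ring having almost stable range 1 is locally stable. -/
theorem stmt_4 (R : Type) [CommRing R] (h : AlmostStableRange1 R) :
    LocallyStable R := by
  intro a b hab
  by_cases hy : ∃ y : R, a + b * y ≠ 0
  · obtain ⟨y, hy⟩ := hy
    refine ⟨y, h _ ?_⟩
    rw [Ne, Ideal.span_singleton_eq_bot]
    exact hy
  · push_neg at hy
    have ha : a = 0 := by simpa using hy 0
    have hb : b = 0 := by have := hy 1; rw [ha] at this; simpa using this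
    rw [ha, hb] at hab
    obtain ⟨u, v, huv⟩ := hab
    simp only [mul_zero, add_zero] at huv
    have : Subsingleton R := subsingleton_of_zero_eq_one huv
    have : Subsingleton (R ⧸ Ideal.span ({a + b * 0} : Set R)) := Quotient.instSubsingletonQuotient _
    refine ⟨0, fun c d _ => ⟨0, ?_⟩⟩
    exact isUnit_of_subsingleton _
end

section
/- Every Bézout commutative ring having adequate range 1 is locally stable. -/
open Matrix

/-! An adequate element `c` of a Bézout ring has a quotient `R/cR` of stable range 1. Given `u, v`
coprime modulo `c`, factor `c = r * s` by adequacy with respect to `u`. Then `u + v * r` is coprime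
to `c`: a common divisor `d` of the two is coprime to `v` and to `r`, hence divides `s` and is
coprime to `u`, which adequacy forbids unless `d` is a unit. -/

section

variable {R : Type*} [CommRing R]

theorem exists_mul_add_mul_eq_one_add_mul_of_isCoprime_mk {c u v : R}
    (h : IsCoprime (Ideal.Quotient.mk (Ideal.span {c}) u) (Ideal.Quotient.mk (Ideal.span {c}) v)) :
    ∃ x y z : R, x * u + y * v = 1 + c * z := by
  obtain ⟨a, b, hab⟩ := h
  obtain ⟨x, rfl⟩ := Ideal.Quotient.mk_surjective a
  obtain ⟨y, rfl⟩ := Ideal.Quotient.mk_surjective b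
  rw [← map_mul, ← map_mul, ← map_add, ← map_one (Ideal.Quotient.mk _), Ideal.Quotient.eq,
    Ideal.mem_span_singleton'] at hab
  obtain ⟨z, hz⟩ := hab
  exact ⟨x, y, z, by linear_combination -hz⟩

theorem IsCoprime.isUnit_mk_span_singleton {w c : R} (h : IsCoprime w c) :
    IsUnit (Ideal.Quotient.mk (Ideal.span {c}) w) := by
  have h' := h.map (Ideal.Quotient.mk (Ideal.span {c}))
  rwa [Ideal.Quotient.mk_singleton_self, isCoprime_zero_right] at h'

end

theorem Adequate.isCoprime_add_mul {R : Type} [CommRing R] [IsBezout R] {c u v x y z : R}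
    (hc : Adequate c) (huv : x * u + y * v = 1 + c * z) :
    ∃ r : R, IsCoprime (u + v * r) c := by
  obtain ⟨r, s, rfl, hru, hs⟩ := hc u
  refine ⟨r, IsRelPrime.isCoprime fun d hdw hdc ↦ ?_⟩
  obtain ⟨k, hk⟩ := hdw
  obtain ⟨l, hl⟩ := hdc
  have hdv : IsCoprime d v :=
    ⟨x * k - z * l, y - x * r, by linear_combination huv - x * hk + z * hl⟩
  have hdr : IsCoprime d r := IsRelPrime.isCoprime fun g hgd hgr ↦ by
    have hgu : g ∣ u := (dvd_add_left (dvd_mul_of_dvd_right hgr v)).mp (hk ▸ hgd.mul_right k)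
    exact hru.isUnit_of_dvd' hgr hgu
  have hdu : IsCoprime d u := by
    convert (hdv.mul_right hdr).neg_right.add_mul_left_right k using 1
    linear_combination hk
  by_contra hd
  exact hs d (hdr.dvd_of_dvd_mul_left ⟨l, hl⟩) hd hdu

theorem Adequate.stableRange1_quotient {R : Type} [CommRing R] [IsBezout R] {c : R}
    (hc : Adequate c) : StableRange1 (R ⧸ Ideal.span ({c} : Set R)) := by
  intro u v huv
  obtain ⟨u, rfl⟩ := Ideal.Quotient.mk_surjective u
  obtain ⟨v, rfl⟩ := Ideal.Quotient.mk_surjective v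
  obtain ⟨x, y, z, hxyz⟩ := exists_mul_add_mul_eq_one_add_mul_of_isCoprime_mk huv
  obtain ⟨r, hr⟩ := hc.isCoprime_add_mul hxyz
  exact ⟨Ideal.Quotient.mk _ r, by simpa using hr.isUnit_mk_span_singleton⟩

/-- Every Bézout commutative ring having adequate range 1 is locally stable. -/
theorem stmt_5 (R : Type) [CommRing R] [IsBezout R] (h : AdequateRange1 R) :
    LocallyStable R := by
  intro a b hab
  obtain ⟨y, hy⟩ := h a b hab
  exact ⟨y, hy.stableRange1_quotient⟩
end

section
/- Every neat commutative ring is locally stable. -/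
open Matrix

/-- Write `s * c + t * d = 1` and `t * d = e + u`. On the component `1 - e`, `t * d = u` is a
unit, so `y = t * u⁻¹ * (1 - e) * (1 - c)` makes `c + d * y` equal to `1` there; on the component
`e`, `s * c = -u`, so `c + d * y = c` has inverse `-s * u⁻¹` there. -/
theorem IsCleanRing.stableRange1 {T : Type} [CommRing T]
    (hc : IsCleanRing T) : StableRange1 T := by
  intro c d hcd
  obtain ⟨s, t, hst⟩ := hcd
  obtain ⟨e, u, he, hu, htd⟩ := hc (t * d)
  obtain ⟨v, huv⟩ := isUnit_iff_exists_inv.mp hu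
  have hee : e * e = e := he
  refine ⟨t * v * (1 - e) * (1 - c), IsUnit.of_mul_eq_one ((1 - e) - e * s * v) ?_⟩
  linear_combination ((1 - c) + v + s * v * (1 - c)
      - v * (1 - c) * ((1 - e) - e * s * v)) * hee
    + (e + (1 - e) * (1 - c) * ((1 - e) - e * s * v)) * huv
    + (e * v + v * (1 - e) * (1 - c) * ((1 - e) - e * s * v)) * htd
    - e * v * hst

theorem StableRange1.of_subsingleton {T : Type} [CommRing T] [Subsingleton T] :
    StableRange1 T :=
  fun _ _ _ => ⟨0, isUnit_of_subsingleton _⟩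

theorem IsCoprime.exists_add_mul_ne_zero {R : Type} [CommRing R] [Nontrivial R] {a b : R}
    (hab : IsCoprime a b) : ∃ y : R, a + b * y ≠ 0 := by
  by_cases ha : a = 0
  · subst ha
    refine ⟨1, ?_⟩
    simpa using (isCoprime_zero_left.mp hab).ne_zero
  · exact ⟨0, by simpa using ha⟩

/-- Every neat commutative ring (every proper homomorphic image is clean)
is locally stable. -/
theorem stmt_7 (R : Type) [CommRing R]
    (h : ∀ I : Ideal R, I ≠ ⊥ → IsCleanRing (R ⧸ I)) :
    LocallyStable R := by
  intro a b hab
  cases subsingleton_or_nontrivial R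
  · exact ⟨0, StableRange1.of_subsingleton⟩
  · obtain ⟨y, hy⟩ := hab.exists_add_mul_ne_zero
    refine ⟨y, (h _ ?_).stableRange1⟩
    rwa [ne_eq, Ideal.span_singleton_eq_bot]
end

section
/- Every locally stable commutative ring has stable range 2. -/
open Matrix

/-- Every locally stable commutative ring has stable range 2. -/
theorem stmt_8 (R : Type) [CommRing R] (h : LocallyStable R) :
    ∀ a b c : R, (∃ x y z : R, a * x + b * y + c * z = 1) →
      ∃ y z : R, IsCoprime (a + c * y) (b + c * z) := by
  intro a b c ⟨x, y, z, hx⟩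
  -- IsCoprime b (a*x + c*z)
  have hcop : IsCoprime b (a * x + c * z) := ⟨y, 1, by linear_combination hx⟩
  obtain ⟨t, hT⟩ := h b (a * x + c * z) hcop
  set d : R := b + (a * x + c * z) * t with hd
  set I : Ideal R := Ideal.span ({d} : Set R) with hI
  set mk : R →+* R ⧸ I := Ideal.Quotient.mk I with hmk
  -- IsCoprime (mk a) (mk c) in the quotient
  have hq : IsCoprime (mk a) (mk c) := by
    refine ⟨mk (x * (1 - t * y)), mk (z * (1 - t * y)), ?_⟩
    have : mk (x * (1 - t * y) * a + z * (1 - t * y) * c) = mk 1 := by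
      rw [Ideal.Quotient.eq]
      refine Ideal.mem_span_singleton.mpr ⟨-y, by simp only [hd]; linear_combination hx⟩
    simpa [map_add, _root_.map_mul, _root_.map_one] using this
  obtain ⟨y1q, hu⟩ := hT (mk a) (mk c) hq
  obtain ⟨y1, rfl⟩ := Ideal.Quotient.mk_surjective y1q
  obtain ⟨w, hw⟩ := hu.exists_right_inv
  obtain ⟨u, rfl⟩ := Ideal.Quotient.mk_surjective w
  have hw' : mk ((a + c * y1) * u) = mk 1 := by
    simpa [map_add, _root_.map_mul, _root_.map_one] using hw
  rw [Ideal.Quotient.eq] at hw'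
  obtain ⟨m, hm⟩ := Ideal.mem_span_singleton.mp hw'
  refine ⟨y1, t * (z - x * y1), ⟨u + (-m) * t * x, -m, by linear_combination hm⟩⟩
end

section
/- Let R be a commutative ring in which every element not in the Jacobson radical J(R) is adequate. Then R is an elementary divisor ring if and only if R is a Bézout ring. -/
open Matrix

namespace EDRproof

variable {R : Type} [CommRing R]

lemma span_pair_ne_top_of_not_coprime {a b : R} (h : ¬ IsCoprime a b) :
    Ideal.span ({a, b} : Set R) ≠ ⊤ := by
  intro ht
  rcases Ideal.mem_span_pair.mp (ht ▸ Submodule.mem_top : (1:R) ∈ Ideal.span ({a,b}:Set R)) with ⟨u, v, huv⟩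
  exact h ⟨u, v, huv⟩

lemma bezout_pair [IsBezout R] (a b : R) :
    ∃ d x y a' b', x*a + y*b = d ∧ a = d*a' ∧ b = d*b' := by
  obtain ⟨d, hd⟩ := (IsBezout.span_pair_isPrincipal a b).principal
  have hd' : Ideal.span ({a, b} : Set R) = Ideal.span {d} := hd
  have ha : a ∈ Ideal.span ({d} : Set R) := by
    rw [← hd']; exact Ideal.subset_span (by simp)
  have hb : b ∈ Ideal.span ({d} : Set R) := by
    rw [← hd']; exact Ideal.subset_span (by simp)
  have hdm : d ∈ Ideal.span ({a, b} : Set R) := by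
    rw [hd']; exact Ideal.subset_span (by simp)
  obtain ⟨a', ha'⟩ := Ideal.mem_span_singleton'.mp ha
  obtain ⟨b', hb'⟩ := Ideal.mem_span_singleton'.mp hb
  obtain ⟨x, y, hxy⟩ := Ideal.mem_span_pair.mp hdm
  exact ⟨d, x, y, a', b', hxy, by rw [← ha', mul_comm], by rw [← hb', mul_comm]⟩

/-- Key Lemma 1: if `c` is adequate and `(a,b,c) = 1` then there is `t` with
`(a + t*b, c) = 1`. -/
lemma lemma1 [IsBezout R] {c : R} (hc : Adequate c) {a b : R}
    (h1 : ∃ u v w : R, u*a + v*b + w*c = 1) :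
    ∃ t l m : R, l * (a + t*b) + m * c = 1 := by
  obtain ⟨r, s, hrs, hra, hs⟩ := hc a
  suffices H : IsCoprime (a + r*b) c by
    obtain ⟨l, m, hlm⟩ := H; exact ⟨r, l, m, hlm⟩
  by_contra hnc
  obtain ⟨M, hM, hle⟩ := Ideal.exists_le_maximal _ (span_pair_ne_top_of_not_coprime hnc)
  have hprime := hM.isPrime
  have hcM : c ∈ M := hle (Ideal.subset_span (by simp))
  have habM : a + r*b ∈ M := hle (Ideal.subset_span (by simp))
  have hrsM : r * s ∈ M := by rw [← hrs]; exact hcM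
  rcases hprime.mem_or_mem hrsM with hrM | hsM
  · have haM : a ∈ M := by
      have := M.sub_mem habM (M.mul_mem_right b hrM); simpa using this
    obtain ⟨u, v, huv⟩ := hra
    exact hM.ne_top ((Ideal.eq_top_iff_one _).2
      (huv ▸ M.add_mem (M.mul_mem_left u hrM) (M.mul_mem_left v haM)))
  · obtain ⟨d, x, y, s1, e, hxy, hs1, he⟩ := bezout_pair s (a + r*b)
    have hdM : d ∈ M := by
      rw [← hxy]; exact M.add_mem (M.mul_mem_left x hsM) (M.mul_mem_left y habM)
    have hdnu : ¬ IsUnit d := fun hu => hM.ne_top (M.eq_top_of_isUnit_mem hdM hu)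
    have hnc2 : ¬ IsCoprime d a := hs d ⟨s1, hs1⟩ hdnu
    obtain ⟨M', hM', hle'⟩ := Ideal.exists_le_maximal _ (span_pair_ne_top_of_not_coprime hnc2)
    have hdM' : d ∈ M' := hle' (Ideal.subset_span (by simp))
    have haM' : a ∈ M' := hle' (Ideal.subset_span (by simp))
    have habM' : a + r*b ∈ M' := by rw [he]; exact M'.mul_mem_right e hdM'
    have hrbM' : r*b ∈ M' := by
      have := M'.sub_mem habM' haM'; simpa using this
    have hsM' : s ∈ M' := by rw [hs1]; exact M'.mul_mem_right s1 hdM'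
    have hcM' : c ∈ M' := by rw [hrs]; exact M'.mul_mem_left r hsM'
    rcases hM'.isPrime.mem_or_mem hrbM' with hrM' | hbM'
    · obtain ⟨u, v, huv⟩ := hra
      exact hM'.ne_top ((Ideal.eq_top_iff_one _).2
        (huv ▸ M'.add_mem (M'.mul_mem_left u hrM') (M'.mul_mem_left v haM')))
    · obtain ⟨u, v, w, huvw⟩ := h1
      exact hM'.ne_top ((Ideal.eq_top_iff_one _).2
        (huvw ▸ M'.add_mem (M'.add_mem (M'.mul_mem_left u haM') (M'.mul_mem_left v hbM'))
          (M'.mul_mem_left w hcM')))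

variable (h : ∀ a : R, a ∉ Ideal.jacobson (⊥ : Ideal R) → Adequate a)

/-- coprimality modulo the Jacobson radical. -/
lemma coprime_of_jacobson {a b c u v w : R} (hc : c ∈ Ideal.jacobson (⊥ : Ideal R))
    (huvw : u*a + v*b + w*c = 1) : ∃ x y : R, x*a + y*b = 1 := by
  have hu : IsUnit (c * (-w) + 1) := Ideal.mem_jacobson_bot.mp hc (-w)
  have heq : c * (-w) + 1 = u*a + v*b := by linear_combination -huvw
  rw [heq] at hu
  obtain ⟨e, he⟩ := hu
  refine ⟨(↑e⁻¹ : R) * u, (↑e⁻¹ : R) * v, ?_⟩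
  calc (↑e⁻¹:R) * u * a + (↑e⁻¹:R) * v * b = (↑e⁻¹:R) * (u*a + v*b) := by ring
  _ = (↑e⁻¹:R) * (↑e:R) := by rw [he]
  _ = 1 := e.inv_mul

include h in
/-- Lemma 2 (stable range 2 style): `(a,b,c)=1` implies there are `x type y` with
`(a + x*c, b + y*c) = 1`. -/
lemma lemma2 [IsBezout R] {a b c u v w : R} (huvw : u*a + v*b + w*c = 1) :
    ∃ x y l m : R, l * (a + x*c) + m * (b + y*c) = 1 := by
  by_cases hcJ : c ∈ Ideal.jacobson (⊥ : Ideal R)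
  · obtain ⟨x, y, hxy⟩ := coprime_of_jacobson hcJ huvw
    exact ⟨0, 0, x, y, by linear_combination hxy⟩
  · by_cases haJ : a ∈ Ideal.jacobson (⊥ : Ideal R)
    · -- use g = a + c, not in J
      have hgJ : a + c ∉ Ideal.jacobson (⊥ : Ideal R) := by
        intro hg
        exact hcJ (by simpa using (Ideal.jacobson ⊥).sub_mem hg haJ)
      have hg := h _ hgJ
      obtain ⟨t, l, m, hlm⟩ := lemma1 hg (a := b) (b := c)
        ⟨v, w - u, u, by linear_combination huvw⟩
      exact ⟨1, t, m, l, by linear_combination hlm⟩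
    · have hg := h _ haJ
      obtain ⟨t, l, m, hlm⟩ := lemma1 hg (a := b) (b := c)
        ⟨v, w, u, by linear_combination huvw⟩
      exact ⟨0, t, m, l, by linear_combination hlm⟩

include h in
/-- Hermite property: gcd extraction with coprime cofactors. -/
lemma hermite [IsBezout R] (a b : R) :
    ∃ d α β x y : R, a = d*α ∧ b = d*β ∧ x*α + y*β = 1 := by
  obtain ⟨d, x, y, a', b', hxy, ha, hb⟩ := bezout_pair a b
  have hann : d * (1 - (x*a' + y*b')) = 0 := by
    have : d = d * (x*a' + y*b') := by
      calc d = x*a + y*b := hxy.symm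
      _ = d * (x*a' + y*b') := by rw [ha, hb]; ring
    linear_combination this
  obtain ⟨x₀, y₀, l, m, hlm⟩ := lemma2 h (a := a') (b := b') (c := 1 - (x*a' + y*b'))
    (u := x) (v := y) (w := 1) (by ring)
  refine ⟨d, a' + x₀ * (1 - (x*a' + y*b')), b' + y₀ * (1 - (x*a' + y*b')), l, m, ?_, ?_, hlm⟩
  · rw [mul_add, ← ha]
    have : d * (x₀ * (1 - (x*a' + y*b'))) = 0 := by
      rw [show d * (x₀ * (1 - (x*a' + y*b'))) = x₀ * (d * (1 - (x*a' + y*b'))) by ring, hann, mul_zero]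
    rw [this, add_zero]
  · rw [mul_add, ← hb]
    have : d * (y₀ * (1 - (x*a' + y*b'))) = 0 := by
      rw [show d * (y₀ * (1 - (x*a' + y*b'))) = y₀ * (d * (1 - (x*a' + y*b'))) by ring, hann, mul_zero]
    rw [this, add_zero]

include h in
/-- Triple gcd extraction with coprime cofactors. -/
lemma triple_extract [IsBezout R] (a b c : R) :
    ∃ e a₁ b₁ c₁ u v w : R, a = e*a₁ ∧ b = e*b₁ ∧ c = e*c₁ ∧ u*a₁ + v*b₁ + w*c₁ = 1 := by
  obtain ⟨g, α, β, x, y, ha, hb, hxy⟩ := hermite h a b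
  obtain ⟨e, γ, κ, X, Y, hg, hc, hXY⟩ := hermite h g c
  refine ⟨e, γ*α, γ*β, κ, X*x, X*y, Y, ?_, ?_, ?_, ?_⟩
  · rw [ha, hg]; ring
  · rw [hb, hg]; ring
  · exact hc
  · calc X*x*(γ*α) + X*y*(γ*β) + Y*κ = X*γ*(x*α + y*β) + Y*κ := by ring
    _ = X*γ + Y*κ := by rw [hxy, mul_one]
    _ = 1 := hXY

include h in
/-- The Gillman–Henriksen type criterion data for coprime triples:
`p*a*q + p'*b*q + p'*c*q' = 1`. -/
lemma criterion_coprime [IsBezout R] {a b c u v w : R} (huvw : u*a + v*b + w*c = 1) :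
    ∃ p p' q q' : R, p*a*q + p'*b*q + p'*c*q' = 1 := by
  by_cases hcJ : c ∈ Ideal.jacobson (⊥ : Ideal R)
  · obtain ⟨x, y, hxy⟩ := coprime_of_jacobson hcJ huvw
    exact ⟨x, y, 1, 0, by linear_combination hxy⟩
  · obtain ⟨t, l, m, hlm⟩ := lemma1 (h _ hcJ) (a := b) (b := a)
      ⟨v, u, w, by linear_combination huvw⟩
    exact ⟨t, 1, l, m, by linear_combination hlm⟩

/-! ### The `1 ⊕ Q` gadget -/

def ext1 {n : ℕ} (Q : Matrix (Fin n) (Fin n) R) : Matrix (Fin (n+1)) (Fin (n+1)) R :=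
  Matrix.of fun i j =>
    Fin.cases (Fin.cases (1:R) (fun _ => 0) j) (fun i' => Fin.cases 0 (fun j' => Q i' j') j) i

@[simp] lemma ext1_zero_zero {n} (Q : Matrix (Fin n) (Fin n) R) : ext1 Q 0 0 = 1 := by
  simp [ext1]

@[simp] lemma ext1_zero_succ {n} (Q : Matrix (Fin n) (Fin n) R) (j : Fin n) :
    ext1 Q 0 j.succ = 0 := by simp [ext1]

@[simp] lemma ext1_succ_zero {n} (Q : Matrix (Fin n) (Fin n) R) (i : Fin n) :
    ext1 Q i.succ 0 = 0 := by simp [ext1]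

@[simp] lemma ext1_succ_succ {n} (Q : Matrix (Fin n) (Fin n) R) (i j : Fin n) :
    ext1 Q i.succ j.succ = Q i j := by simp [ext1]

lemma mul_ext1_zero {m n} (X : Matrix (Fin m) (Fin (n+1)) R) (Q : Matrix (Fin n) (Fin n) R)
    (i : Fin m) : (X * ext1 Q) i 0 = X i 0 := by
  rw [Matrix.mul_apply, Fin.sum_univ_succ]; simp

lemma mul_ext1_succ {m n} (X : Matrix (Fin m) (Fin (n+1)) R) (Q : Matrix (Fin n) (Fin n) R)
    (i : Fin m) (j : Fin n) : (X * ext1 Q) i j.succ = ∑ k, X i k.succ * Q k j := by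
  rw [Matrix.mul_apply, Fin.sum_univ_succ]; simp

lemma ext1_mul_zero {m n} (P : Matrix (Fin m) (Fin m) R) (Y : Matrix (Fin (m+1)) (Fin n) R)
    (j : Fin n) : (ext1 P * Y) 0 j = Y 0 j := by
  rw [Matrix.mul_apply, Fin.sum_univ_succ]; simp

lemma ext1_mul_succ {m n} (P : Matrix (Fin m) (Fin m) R) (Y : Matrix (Fin (m+1)) (Fin n) R)
    (i : Fin m) (j : Fin n) : (ext1 P * Y) i.succ j = ∑ k, P i k * Y k.succ j := by
  rw [Matrix.mul_apply, Fin.sum_univ_succ]; simp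

lemma ext1_mul_ext1 {n} (P Q : Matrix (Fin n) (Fin n) R) :
    ext1 P * ext1 Q = ext1 (P * Q) := by
  ext i j
  refine Fin.cases ?_ (fun i' => ?_) i
  · rw [ext1_mul_zero]
    refine Fin.cases ?_ (fun j' => ?_) j <;> simp
  · refine Fin.cases ?_ (fun j' => ?_) j
    · rw [ext1_mul_succ]; simp
    · rw [ext1_mul_succ]; simp [Matrix.mul_apply]

lemma ext1_one {n} : ext1 (1 : Matrix (Fin n) (Fin n) R) = 1 := by
  ext i j
  refine Fin.cases ?_ (fun i' => ?_) i <;> refine Fin.cases ?_ (fun j' => ?_) j <;>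
    simp [Matrix.one_apply, Fin.succ_ne_zero, (Fin.succ_ne_zero _).symm, Fin.succ_inj]

lemma isUnit_ext1 {n} {Q : Matrix (Fin n) (Fin n) R} (hQ : IsUnit Q) : IsUnit (ext1 Q) := by
  obtain ⟨u, rfl⟩ := hQ
  exact ⟨⟨ext1 u, ext1 ↑u⁻¹,
    by rw [ext1_mul_ext1, u.mul_inv, ext1_one],
    by rw [ext1_mul_ext1, u.inv_mul, ext1_one]⟩, rfl⟩

/-! ### case analysis on `Fin (n+2)` -/

lemma fin2cases {n : ℕ} {motive : Fin (n+2) → Prop} (h0 : motive 0) (h1 : motive 1)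
    (hs : ∀ k : Fin n, motive k.succ.succ) (i : Fin (n+2)) : motive i := by
  refine Fin.cases h0 (fun i₁ => ?_) i
  refine Fin.cases ?_ (fun i₂ => hs i₂) i₁
  rw [Fin.succ_zero_eq_one]; exact h1

/-! ### The `U ⊕ 1` gadget for a 2×2 matrix `U` -/

def embF {n : ℕ} (U : Matrix (Fin 2) (Fin 2) R) : Matrix (Fin (n+2)) (Fin (n+2)) R :=
  Matrix.of fun i j =>
    if hi : (i:ℕ) < 2 then
      if hj : (j:ℕ) < 2 then U ⟨i, hi⟩ ⟨j, hj⟩ else 0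
    else if (i:ℕ) = (j:ℕ) then 1 else 0

@[simp] lemma embF_00 {n} (U : Matrix (Fin 2) (Fin 2) R) : embF (n := n) U 0 0 = U 0 0 := by
  simp [embF]
@[simp] lemma embF_01 {n} (U : Matrix (Fin 2) (Fin 2) R) : embF (n := n) U 0 1 = U 0 1 := by
  simp [embF]
@[simp] lemma embF_10 {n} (U : Matrix (Fin 2) (Fin 2) R) : embF (n := n) U 1 0 = U 1 0 := by
  simp [embF]
@[simp] lemma embF_11 {n} (U : Matrix (Fin 2) (Fin 2) R) : embF (n := n) U 1 1 = U 1 1 := by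
  simp [embF]
@[simp] lemma embF_0s {n} (U : Matrix (Fin 2) (Fin 2) R) (k : Fin n) :
    embF U 0 k.succ.succ = 0 := by simp [embF]
@[simp] lemma embF_1s {n} (U : Matrix (Fin 2) (Fin 2) R) (k : Fin n) :
    embF U 1 k.succ.succ = 0 := by simp [embF]
@[simp] lemma embF_s0 {n} (U : Matrix (Fin 2) (Fin 2) R) (k : Fin n) :
    embF U k.succ.succ 0 = 0 := by simp [embF]
@[simp] lemma embF_s1 {n} (U : Matrix (Fin 2) (Fin 2) R) (k : Fin n) :
    embF U k.succ.succ 1 = 0 := by simp [embF]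
lemma embF_ss {n} (U : Matrix (Fin 2) (Fin 2) R) (i j : Fin n) :
    embF U i.succ.succ j.succ.succ = if i = j then (1:R) else 0 := by
  rcases eq_or_ne i j with rfl | hne
  · simp [embF]
  · simp only [embF, Matrix.of_apply]
    rw [dif_neg (by simp), if_neg (by simpa [Fin.val_inj] using hne), if_neg hne]

lemma mul_embF_zero {m n} (X : Matrix (Fin m) (Fin (n+2)) R) (U : Matrix (Fin 2) (Fin 2) R)
    (i : Fin m) : (X * embF (n := n) U) i 0 = X i 0 * U 0 0 + X i 1 * U 1 0 := by
  rw [Matrix.mul_apply, Fin.sum_univ_succ, Fin.sum_univ_succ]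
  simp [Fin.succ_zero_eq_one]

lemma mul_embF_one {m n} (X : Matrix (Fin m) (Fin (n+2)) R) (U : Matrix (Fin 2) (Fin 2) R)
    (i : Fin m) : (X * embF (n := n) U) i 1 = X i 0 * U 0 1 + X i 1 * U 1 1 := by
  rw [Matrix.mul_apply, Fin.sum_univ_succ, Fin.sum_univ_succ]
  simp [Fin.succ_zero_eq_one]

lemma mul_embF_succ {m n} (X : Matrix (Fin m) (Fin (n+2)) R) (U : Matrix (Fin 2) (Fin 2) R)
    (i : Fin m) (l : Fin n) : (X * embF (n := n) U) i l.succ.succ = X i l.succ.succ := by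
  rw [Matrix.mul_apply, Fin.sum_univ_succ, Fin.sum_univ_succ]
  simp [Fin.succ_zero_eq_one, embF_ss, mul_ite]

lemma embF_mul_zero {m n} (U : Matrix (Fin 2) (Fin 2) R) (Y : Matrix (Fin (m+2)) (Fin n) R)
    (j : Fin n) : (embF (n := m) U * Y) 0 j = U 0 0 * Y 0 j + U 0 1 * Y 1 j := by
  rw [Matrix.mul_apply, Fin.sum_univ_succ, Fin.sum_univ_succ]
  simp [Fin.succ_zero_eq_one]

lemma embF_mul_one {m n} (U : Matrix (Fin 2) (Fin 2) R) (Y : Matrix (Fin (m+2)) (Fin n) R)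
    (j : Fin n) : (embF (n := m) U * Y) 1 j = U 1 0 * Y 0 j + U 1 1 * Y 1 j := by
  rw [Matrix.mul_apply, Fin.sum_univ_succ, Fin.sum_univ_succ]
  simp [Fin.succ_zero_eq_one]

lemma embF_mul_succ {m n} (U : Matrix (Fin 2) (Fin 2) R) (Y : Matrix (Fin (m+2)) (Fin n) R)
    (k : Fin m) (j : Fin n) : (embF (n := m) U * Y) k.succ.succ j = Y k.succ.succ j := by
  rw [Matrix.mul_apply, Fin.sum_univ_succ, Fin.sum_univ_succ]
  simp [Fin.succ_zero_eq_one, embF_ss, ite_mul]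

lemma embF_mul_embF {n} (U V : Matrix (Fin 2) (Fin 2) R) :
    embF (n := n) U * embF V = embF (U * V) := by
  have h2 : ∀ (A B : Matrix (Fin 2) (Fin 2) R) (i j : Fin 2),
      (A * B) i j = A i 0 * B 0 j + A i 1 * B 1 j := by
    intro A B i j; rw [Matrix.mul_apply, Fin.sum_univ_two]
  ext i j
  induction i using fin2cases with
  | h0 =>
    rw [embF_mul_zero]
    induction j using fin2cases with
    | h0 => simp [h2]
    | h1 => simp [h2]
    | hs l => simp
  | h1 =>
    rw [embF_mul_one]
    induction j using fin2cases with
    | h0 => simp [h2]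
    | h1 => simp [h2]
    | hs l => simp
  | hs k =>
    rw [embF_mul_succ]
    induction j using fin2cases with
    | h0 => simp
    | h1 => simp
    | hs l => simp [embF_ss]

lemma embF_one {n} : embF (n := n) (1 : Matrix (Fin 2) (Fin 2) R) = 1 := by
  ext i j
  induction i using fin2cases with
  | h0 =>
    induction j using fin2cases with
    | h0 => simp [Matrix.one_apply]
    | h1 => simp [Matrix.one_apply, Fin.ext_iff]
    | hs l => simp [Matrix.one_apply, Fin.ext_iff]
  | h1 =>
    induction j using fin2cases with
    | h0 => simp [Matrix.one_apply, Fin.ext_iff]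
    | h1 => simp [Matrix.one_apply]
    | hs l => simp [Matrix.one_apply, Fin.ext_iff]
  | hs k =>
    induction j using fin2cases with
    | h0 => simp [Matrix.one_apply, Fin.ext_iff]
    | h1 => simp [Matrix.one_apply, Fin.ext_iff]
    | hs l => simp [embF_ss, Matrix.one_apply, Fin.succ_inj]

lemma isUnit_embF {n} {U : Matrix (Fin 2) (Fin 2) R} (hU : IsUnit U) :
    IsUnit (embF (n := n) U) := by
  obtain ⟨u, rfl⟩ := hU
  exact ⟨⟨embF ↑u, embF ↑u⁻¹,
    by rw [embF_mul_embF, u.mul_inv, embF_one],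
    by rw [embF_mul_embF, u.inv_mul, embF_one]⟩, rfl⟩


/-! ### row and column clearing gadgets -/

def Trow {n : ℕ} (w : Fin (n+1) → R) : Matrix (Fin (n+1)) (Fin (n+1)) R :=
  Matrix.of fun k l => if k = 0 then (if l = 0 then 1 else w l) else if k = l then 1 else 0

lemma mul_Trow_zero {m n} (X : Matrix (Fin m) (Fin (n+1)) R) (w : Fin (n+1) → R) (i : Fin m) :
    (X * Trow w) i 0 = X i 0 := by
  rw [Matrix.mul_apply, Fin.sum_univ_succ]
  simp [Trow, Fin.succ_ne_zero]

lemma mul_Trow_succ {m n} (X : Matrix (Fin m) (Fin (n+1)) R) (w : Fin (n+1) → R) (i : Fin m)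
    (l : Fin n) : (X * Trow w) i l.succ = X i 0 * w l.succ + X i l.succ := by
  rw [Matrix.mul_apply, Fin.sum_univ_succ]
  simp [Trow, Fin.succ_ne_zero, Fin.succ_inj, mul_ite]

lemma Trow_mul_Trow {n} (w w' : Fin (n+1) → R) : Trow w * Trow w' = Trow (w + w') := by
  ext i j
  refine Fin.cases ?_ (fun l => ?_) j
  · rw [mul_Trow_zero]
    refine Fin.cases ?_ (fun k => ?_) i <;> simp [Trow, Fin.succ_ne_zero]
  · rw [mul_Trow_succ]
    refine Fin.cases ?_ (fun k => ?_) i <;>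
      simp [Trow, Fin.succ_ne_zero, (Fin.succ_ne_zero _).symm, add_comm]

lemma Trow_zero {n} : Trow (0 : Fin (n+1) → R) = 1 := by
  ext i j
  refine Fin.cases ?_ (fun k => ?_) i <;> refine Fin.cases ?_ (fun l => ?_) j <;>
    simp [Trow, Matrix.one_apply, Fin.succ_ne_zero, (Fin.succ_ne_zero _).symm]

lemma isUnit_Trow {n} (w : Fin (n+1) → R) : IsUnit (Trow w) := by
  have h1 : w + -w = 0 := by funext k; simp
  have h2 : -w + w = 0 := by funext k; simp
  exact ⟨⟨Trow w, Trow (-w),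
    by rw [Trow_mul_Trow, h1, Trow_zero],
    by rw [Trow_mul_Trow, h2, Trow_zero]⟩, rfl⟩

def Lcol {m : ℕ} (v : Fin (m+1) → R) : Matrix (Fin (m+1)) (Fin (m+1)) R :=
  Matrix.of fun i k => if i = k then 1 else if k = 0 then v i else 0

lemma Lcol_mul_zero {m n} (v : Fin (m+1) → R) (Y : Matrix (Fin (m+1)) (Fin n) R) (j : Fin n) :
    (Lcol v * Y) 0 j = Y 0 j := by
  rw [Matrix.mul_apply, Fin.sum_univ_succ]
  simp [Lcol, Fin.succ_ne_zero, (Fin.succ_ne_zero _).symm]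

lemma Lcol_mul_succ {m n} (v : Fin (m+1) → R) (Y : Matrix (Fin (m+1)) (Fin n) R) (i : Fin m)
    (j : Fin n) : (Lcol v * Y) i.succ j = v i.succ * Y 0 j + Y i.succ j := by
  rw [Matrix.mul_apply, Fin.sum_univ_succ]
  simp [Lcol, Fin.succ_ne_zero, Fin.succ_inj, ite_mul]

lemma Lcol_mul_Lcol {m} (v v' : Fin (m+1) → R) : Lcol v * Lcol v' = Lcol (v + v') := by
  ext i j
  refine Fin.cases ?_ (fun k => ?_) i
  · rw [Lcol_mul_zero]
    refine Fin.cases ?_ (fun l => ?_) j <;>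
      simp [Lcol, Fin.succ_ne_zero, (Fin.succ_ne_zero _).symm]
  · rw [Lcol_mul_succ]
    refine Fin.cases ?_ (fun l => ?_) j <;>
      simp [Lcol, Fin.succ_ne_zero, (Fin.succ_ne_zero _).symm, Fin.succ_inj]

lemma Lcol_zero {m} : Lcol (0 : Fin (m+1) → R) = 1 := by
  ext i j
  refine Fin.cases ?_ (fun k => ?_) i <;> refine Fin.cases ?_ (fun l => ?_) j <;>
    simp [Lcol, Matrix.one_apply, Fin.succ_ne_zero, (Fin.succ_ne_zero _).symm, Fin.succ_inj]

lemma isUnit_Lcol {m} (v : Fin (m+1) → R) : IsUnit (Lcol v) := by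
  have h1 : v + -v = 0 := by funext k; simp
  have h2 : -v + v = 0 := by funext k; simp
  exact ⟨⟨Lcol v, Lcol (-v),
    by rw [Lcol_mul_Lcol, h1, Lcol_zero],
    by rw [Lcol_mul_Lcol, h2, Lcol_zero]⟩, rfl⟩

/-! ### divisibility of entries -/

lemma dvd_mul_left_entries {l m n} {d : R} {X : Matrix (Fin m) (Fin n) R}
    (hX : ∀ i j, d ∣ X i j) (Y : Matrix (Fin l) (Fin m) R) : ∀ i j, d ∣ (Y * X) i j := by
  intro i j; rw [Matrix.mul_apply]
  exact Finset.dvd_sum fun k _ => Dvd.dvd.mul_left (hX k j) _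

lemma dvd_mul_right_entries {l m n} {d : R} {X : Matrix (Fin m) (Fin n) R}
    (hX : ∀ i j, d ∣ X i j) (Y : Matrix (Fin n) (Fin l) R) : ∀ i j, d ∣ (X * Y) i j := by
  intro i j; rw [Matrix.mul_apply]
  exact Finset.dvd_sum fun k _ => Dvd.dvd.mul_right (hX i k) _


/-! ### Hermite: clearing a row -/

def rowM {n : ℕ} (v : Fin n → R) : Matrix (Fin 1) (Fin n) R := Matrix.of fun _ k => v k

lemma rowM_mul_apply {n : ℕ} (v : Fin n → R) (Q : Matrix (Fin n) (Fin n) R) (j : Fin n) :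
    (rowM v * Q) 0 j = ∑ k, v k * Q k j := by
  rw [Matrix.mul_apply]; rfl

lemma Hrow (h : ∀ a : R, a ∉ Ideal.jacobson (⊥ : Ideal R) → Adequate a) [IsBezout R] :
    ∀ (n : ℕ) (v : Fin (n+1) → R),
    ∃ Q : Matrix (Fin (n+1)) (Fin (n+1)) R, IsUnit Q ∧
      (∀ j : Fin n, (∑ k, v k * Q k j.succ) = 0) ∧
      (∀ j, (∑ k, v k * Q k 0) ∣ v j) := by
  intro n
  induction n with
  | zero =>
    intro v
    refine ⟨1, isUnit_one, fun j => j.elim0, fun j => ?_⟩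
    have hj : j = 0 := Fin.fin_one_eq_zero j
    subst hj
    simp [Matrix.one_apply]
  | succ n IH =>
    intro v
    obtain ⟨Q₁, hQ₁, hz, hd⟩ := IH (fun k => v k.succ)
    set d' := ∑ k, v k.succ * Q₁ k 0 with hd'
    obtain ⟨e, α, β, x, y, hv0, hdd, hxy⟩ := hermite h (v 0) d'
    set U : Matrix (Fin 2) (Fin 2) R := !![x, -β; y, α] with hU
    have hUunit : IsUnit U := by
      rw [Matrix.isUnit_iff_isUnit_det, Matrix.det_fin_two_of]
      have he : x*α - (-β)*y = 1 := by linear_combination hxy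
      rw [he]; exact isUnit_one
    have hU00 : U 0 0 = x := rfl
    have hU01 : U 0 1 = -β := rfl
    have hU10 : U 1 0 = y := rfl
    have hU11 : U 1 1 = α := rfl
    set W : Matrix (Fin 1) (Fin (n+2)) R := rowM v * ext1 Q₁ with hW
    have hW0 : W 0 0 = v 0 := by rw [hW, mul_ext1_zero]; rfl
    have hWsucc : ∀ j : Fin (n+1), W 0 j.succ = ∑ k, v k.succ * Q₁ k j := by
      intro j; rw [hW, mul_ext1_succ]; rfl
    have hW1 : W 0 1 = d' := by
      rw [← Fin.succ_zero_eq_one, hWsucc]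
    have hWss : ∀ j : Fin n, W 0 j.succ.succ = 0 := by
      intro j; rw [hWsucc]; exact hz j
    have key : ∀ j, (∑ k, v k * (ext1 Q₁ * embF (n := n) U) k j) = (W * embF (n := n) U) 0 j := by
      intro j
      rw [hW, Matrix.mul_assoc, rowM_mul_apply]
    refine ⟨ext1 Q₁ * embF (n := n) U, (isUnit_ext1 hQ₁).mul (isUnit_embF hUunit), ?_, ?_⟩
    · intro j
      rw [key]
      refine Fin.cases ?_ (fun j₀ => ?_) j
      · rw [Fin.succ_zero_eq_one, mul_embF_one, hW0, hW1, hU01, hU11, hv0, hdd]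
        ring
      · rw [mul_embF_succ]
        exact hWss j₀
    · have hcorner : (∑ k, v k * (ext1 Q₁ * embF (n := n) U) k 0) = e := by
        rw [key, mul_embF_zero, hW0, hW1, hU00, hU10, hv0, hdd]
        linear_combination e * hxy
      rw [hcorner]
      intro j
      refine Fin.cases ?_ (fun j₀ => ?_) j
      · exact ⟨α, hv0⟩
      · exact dvd_trans ⟨β, hdd⟩ (hd j₀)

lemma Hcol (h : ∀ a : R, a ∉ Ideal.jacobson (⊥ : Ideal R) → Adequate a) [IsBezout R]
    (m : ℕ) (v : Fin (m+1) → R) :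
    ∃ P : Matrix (Fin (m+1)) (Fin (m+1)) R, IsUnit P ∧
      (∀ i : Fin m, (∑ k, P i.succ k * v k) = 0) ∧
      (∀ i, (∑ k, P 0 k * v k) ∣ v i) := by
  obtain ⟨Q, hQ, hz, hd⟩ := Hrow h m v
  have ht : ∀ (i : Fin (m+1)), (∑ k, Qᵀ i k * v k) = ∑ k, v k * Q k i := by
    intro i
    exact Finset.sum_congr rfl fun k _ => by rw [Matrix.transpose_apply, mul_comm]
  refine ⟨Qᵀ, ?_, fun i => ?_, fun i => ?_⟩
  · rwa [Matrix.isUnit_iff_isUnit_det, Matrix.det_transpose, ← Matrix.isUnit_iff_isUnit_det]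
  · rw [ht]; exact hz i
  · rw [ht]; exact hd i


/-! ### the 2×2 criterion corner lemma -/

lemma corner2 (h : ∀ a : R, a ∉ Ideal.jacobson (⊥ : Ideal R) → Adequate a) [IsBezout R]
    (a b c : R) :
    ∃ (P₂ Q₂ : Matrix (Fin 2) (Fin 2) R) (e : R), IsUnit P₂ ∧ IsUnit Q₂ ∧
      (P₂ * !![a, 0; b, c] * Q₂) 0 0 = e ∧ e ∣ a ∧ e ∣ b ∧ e ∣ c := by
  obtain ⟨e, a₁, b₁, c₁, u, v, w, ha, hb, hc, huvw⟩ := triple_extract h a b c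
  obtain ⟨p, p', q, q', hcrit⟩ := criterion_coprime h huvw
  refine ⟨!![p, p'; -(b₁*q + c₁*q'), a₁*q], !![q, -(p'*c₁); q', p*a₁ + p'*b₁], e, ?_, ?_, ?_,
    ⟨a₁, ha⟩, ⟨b₁, hb⟩, ⟨c₁, hc⟩⟩
  · rw [Matrix.isUnit_iff_isUnit_det, Matrix.det_fin_two_of]
    have hd : p * (a₁*q) - p' * (-(b₁*q + c₁*q')) = 1 := by linear_combination hcrit
    rw [hd]; exact isUnit_one
  · rw [Matrix.isUnit_iff_isUnit_det, Matrix.det_fin_two_of]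
    have hd : q * (p*a₁ + p'*b₁) - (-(p'*c₁)) * q' = 1 := by linear_combination hcrit
    rw [hd]; exact isUnit_one
  · have hent : (!![p, p'; -(b₁*q + c₁*q'), a₁*q] * !![a, 0; b, c] *
        !![q, -(p'*c₁); q', p*a₁ + p'*b₁]) 0 0 = p*a*q + p'*b*q + p'*c*q' := by
      simp [Matrix.mul_apply, Fin.sum_univ_two]
      ring
    rw [hent, ha, hb, hc]
    linear_combination e * hcrit

/-! ### divisibility through unit conjugation -/

lemma dvd_all_of_unit_conj {m n : ℕ} {e : R} {P : Matrix (Fin m) (Fin m) R}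
    {A : Matrix (Fin m) (Fin n) R} {Q : Matrix (Fin n) (Fin n) R}
    (hP : IsUnit P) (hQ : IsUnit Q) (hdvd : ∀ i j, e ∣ (P * A * Q) i j) :
    ∀ i j, e ∣ A i j := by
  obtain ⟨p, hp⟩ := hP
  obtain ⟨q, hq⟩ := hQ
  have hA : (↑p⁻¹ : Matrix (Fin m) (Fin m) R) * (P * A * Q) * (↑q⁻¹ : Matrix (Fin n) (Fin n) R)
      = A := by
    rw [← hp, ← hq, Matrix.mul_assoc (↑p : Matrix (Fin m) (Fin m) R) A
      (↑q : Matrix (Fin n) (Fin n) R), ← Matrix.mul_assoc (↑p⁻¹ : Matrix (Fin m) (Fin m) R)]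
    rw [← Units.val_mul, inv_mul_cancel, Units.val_one, Matrix.one_mul, Matrix.mul_assoc,
      ← Units.val_mul, mul_inv_cancel, Units.val_one, Matrix.mul_one]
  intro i j
  rw [← hA]
  exact dvd_mul_right_entries (dvd_mul_left_entries hdvd _) _ i j


lemma embF_corner {m n} (X : Matrix (Fin (m+2)) (Fin (n+2)) R) (U V : Matrix (Fin 2) (Fin 2) R) :
    (embF (n := m) U * X * embF (n := n) V) 0 0
      = (U * !![X 0 0, X 0 1; X 1 0, X 1 1] * V) 0 0 := by
  rw [Matrix.mul_assoc, embF_mul_zero, mul_embF_zero, mul_embF_zero]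
  simp only [Matrix.mul_apply, Fin.sum_univ_two]
  simp
  ring

lemma corner_gcd (h : ∀ a : R, a ∉ Ideal.jacobson (⊥ : Ideal R) → Adequate a) [IsBezout R] :
    ∀ (m n : ℕ) (A : Matrix (Fin (m+1)) (Fin (n+1)) R),
    ∃ (P : Matrix (Fin (m+1)) (Fin (m+1)) R) (Q : Matrix (Fin (n+1)) (Fin (n+1)) R),
      IsUnit P ∧ IsUnit Q ∧ ∀ i j, (P * A * Q) 0 0 ∣ A i j := by
  intro m
  induction m with
  | zero =>
    intro n A
    obtain ⟨Q, hQ, _, hd⟩ := Hrow h n (fun k => A 0 k)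
    refine ⟨1, Q, isUnit_one, hQ, ?_⟩
    intro i j
    have hi : i = 0 := Fin.fin_one_eq_zero i
    subst hi
    rw [Matrix.one_mul, Matrix.mul_apply]
    exact hd j
  | succ m IH =>
    intro n A
    rcases n with _ | n'
    · obtain ⟨P, hP, _, hd⟩ := Hcol h (m+1) (fun k => A k 0)
      refine ⟨P, 1, hP, isUnit_one, ?_⟩
      intro i j
      have hj : j = 0 := Fin.fin_one_eq_zero j
      subst hj
      rw [Matrix.mul_one, Matrix.mul_apply]
      exact hd i
    · set A' : Matrix (Fin (m+1)) (Fin (n'+2)) R := Matrix.of (fun i j => A i.succ j) with hA'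
      obtain ⟨P', Q', hP', hQ', hdiv'⟩ := IH (n'+1) A'
      set C := P' * A' * Q' with hC
      set d₁ := C 0 0 with hd₁
      have hdC : ∀ i j, d₁ ∣ C i j := by
        have h1 : ∀ i j, d₁ ∣ (A' * Q') i j := dvd_mul_right_entries hdiv' Q'
        have h2 : ∀ i j, d₁ ∣ (P' * (A' * Q')) i j := dvd_mul_left_entries h1 P'
        intro i j
        rw [hC, Matrix.mul_assoc]
        exact h2 i j
      set B : Matrix (Fin (m+2)) (Fin (n'+2)) R := ext1 P' * A * Q' with hB
      have hBs : ∀ (i : Fin (m+1)) (j : Fin (n'+2)), B i.succ j = C i j := by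
        intro i j
        rw [hB, Matrix.mul_assoc, ext1_mul_succ, hC, Matrix.mul_assoc, Matrix.mul_apply]
        refine Finset.sum_congr rfl (fun k _ => ?_)
        rw [Matrix.mul_apply, Matrix.mul_apply]
        rfl
      have hB10 : B 1 0 = d₁ := by
        rw [← Fin.succ_zero_eq_one, hBs]
      obtain ⟨Q₂, hQ₂, hz₂, hd₂⟩ := Hrow h n' (fun k : Fin (n'+1) => B 0 k.succ)
      set B₂ := B * ext1 Q₂ with hB₂
      set b₀ := B₂ 0 0 with hb₀
      set g := B₂ 0 1 with hg
      have hB₂col0 : ∀ i, B₂ i 0 = B i 0 := fun i => by rw [hB₂, mul_ext1_zero]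
      have hB₂0succ : ∀ j : Fin (n'+1), B₂ 0 j.succ = ∑ k, B 0 k.succ * Q₂ k j := by
        intro j; rw [hB₂, mul_ext1_succ]
      have hB₂0ss : ∀ j : Fin n', B₂ 0 j.succ.succ = 0 := by
        intro j; rw [hB₂0succ]; exact hz₂ j
      have hB₂10 : B₂ 1 0 = d₁ := by rw [hB₂col0, hB10]
      have hdB₂s : ∀ (i : Fin (m+1)) j, d₁ ∣ B₂ i.succ j := by
        intro i j
        rw [hB₂, Matrix.mul_apply]
        refine Finset.dvd_sum (fun k _ => Dvd.dvd.mul_right ?_ _)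
        rw [hBs]; exact hdC i k
      have h11 : d₁ ∣ B₂ 1 1 := by
        have := hdB₂s 0 1; rwa [Fin.succ_zero_eq_one] at this
      obtain ⟨κ, hκ⟩ := h11
      obtain ⟨P₂', Q₂', e, hP₂', hQ₂', hcorner, hed, heb, hec⟩ := corner2 h d₁ b₀ (g - κ*b₀)
      set S : Matrix (Fin 2) (Fin 2) R := !![0,1;1,0] with hSdef
      set T : Matrix (Fin 2) (Fin 2) R := !![1, -κ; 0, 1] with hTdef
      have hS : IsUnit S := by
        rw [Matrix.isUnit_iff_isUnit_det, Matrix.det_fin_two_of]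
        simp
      have hT : IsUnit T := by
        rw [Matrix.isUnit_iff_isUnit_det, Matrix.det_fin_two_of]
        simp
      have hSMT : S * !![b₀, g; d₁, B₂ 1 1] * T = !![d₁, 0; b₀, g - κ*b₀] := by
        rw [hκ]
        ext i j
        fin_cases i <;> fin_cases j <;>
          simp [Matrix.mul_apply, Fin.sum_univ_two, hSdef, hTdef] <;> ring
      refine ⟨embF (n := m) (P₂' * S) * ext1 P', Q' * ext1 Q₂ * embF (n := n') (T * Q₂'),
        (isUnit_embF (hP₂'.mul hS)).mul (isUnit_ext1 hP'),
        (hQ'.mul (isUnit_ext1 hQ₂)).mul (isUnit_embF (hT.mul hQ₂')), ?_⟩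
      have hassoc : embF (n := m) (P₂' * S) * ext1 P' * A *
          (Q' * ext1 Q₂ * embF (n := n') (T * Q₂'))
          = embF (n := m) (P₂' * S) * B₂ * embF (n := n') (T * Q₂') := by
        rw [hB₂, hB]
        simp only [Matrix.mul_assoc]
      have hsub : !![B₂ 0 0, B₂ 0 1; B₂ 1 0, B₂ 1 1] = !![b₀, g; d₁, B₂ 1 1] := by
        rw [← hb₀, ← hg, hB₂10]
      have hcv : (embF (n := m) (P₂' * S) * ext1 P' * A *
          (Q' * ext1 Q₂ * embF (n := n') (T * Q₂'))) 0 0 = e := by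
        rw [hassoc, embF_corner, hsub]
        have h2x2 : P₂' * S * !![b₀, g; d₁, B₂ 1 1] * (T * Q₂')
            = P₂' * (S * !![b₀, g; d₁, B₂ 1 1] * T) * Q₂' := by
          simp only [Matrix.mul_assoc]
        rw [h2x2, hSMT]
        exact hcorner
      rw [hcv]
      have heB₂ : ∀ i j, e ∣ B₂ i j := by
        intro i j
        refine Fin.cases ?_ (fun i₀ => ?_) i
        · induction j using fin2cases with
          | h0 => exact heb
          | h1 =>
            have : g = (g - κ*b₀) + κ*b₀ := by ring
            rw [← hg, this]
            exact dvd_add hec (Dvd.dvd.mul_left heb κ)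
          | hs l => rw [hB₂0ss]; exact dvd_zero e
        · exact dvd_trans hed (hdB₂s i₀ j)
      have hB₂eq : B₂ = ext1 P' * A * (Q' * ext1 Q₂) := by
        rw [hB₂, hB]
        simp only [Matrix.mul_assoc]
      refine dvd_all_of_unit_conj (isUnit_ext1 hP') (hQ'.mul (isUnit_ext1 hQ₂)) ?_
      intro i j
      rw [← hB₂eq]
      exact heB₂ i j


lemma corner_clear (h : ∀ a : R, a ∉ Ideal.jacobson (⊥ : Ideal R) → Adequate a) [IsBezout R]
    (m n : ℕ) (A : Matrix (Fin (m+1)) (Fin (n+1)) R) :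
    ∃ (P : Matrix (Fin (m+1)) (Fin (m+1)) R) (Q : Matrix (Fin (n+1)) (Fin (n+1)) R),
      IsUnit P ∧ IsUnit Q ∧
      (∀ j : Fin n, (P * A * Q) 0 j.succ = 0) ∧
      (∀ i : Fin m, (P * A * Q) i.succ 0 = 0) ∧
      (∀ i j, (P * A * Q) 0 0 ∣ (P * A * Q) i j) := by
  obtain ⟨P₁, Q₁, hP₁, hQ₁, hdvdA⟩ := corner_gcd h m n A
  set X := P₁ * A * Q₁ with hX
  set e := X 0 0 with he
  have hdX : ∀ i j, e ∣ X i j := by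
    have h1 : ∀ i j, e ∣ (A * Q₁) i j := dvd_mul_right_entries hdvdA Q₁
    have h2 : ∀ i j, e ∣ (P₁ * (A * Q₁)) i j := dvd_mul_left_entries h1 P₁
    intro i j; rw [hX, Matrix.mul_assoc]; exact h2 i j
  choose cw hcw using fun l => hdX 0 l
  set w : Fin (n+1) → R := fun l => -(cw l) with hwdef
  set X₂ := X * Trow w with hX₂
  have hX₂col0 : ∀ i, X₂ i 0 = X i 0 := fun i => by rw [hX₂, mul_Trow_zero]
  have hX₂0succ : ∀ l : Fin n, X₂ 0 l.succ = 0 := by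
    intro l
    have hh : X₂ 0 l.succ = X 0 0 * w l.succ + X 0 l.succ := by rw [hX₂, mul_Trow_succ]
    rw [hh, hwdef, ← he, hcw l.succ]
    ring
  have hdX₂ : ∀ i j, e ∣ X₂ i j := by
    intro i j; rw [hX₂]; exact dvd_mul_right_entries hdX _ i j
  choose cv hcv using fun i => hdX₂ i 0
  set v : Fin (m+1) → R := fun i => -(cv i) with hvdef
  set X₃ := Lcol v * X₂ with hX₃
  have hX₃0 : ∀ j, X₃ 0 j = X₂ 0 j := fun j => by rw [hX₃, Lcol_mul_zero]
  have hX₃succ0 : ∀ i : Fin m, X₃ i.succ 0 = 0 := by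
    intro i
    have hh : X₃ i.succ 0 = v i.succ * X₂ 0 0 + X₂ i.succ 0 := by rw [hX₃, Lcol_mul_succ]
    have h00 : X₂ 0 0 = e := by rw [hX₂col0, ← he]
    rw [hh, h00, hvdef, hcv i.succ]
    ring
  have hX₃00 : X₃ 0 0 = e := by rw [hX₃0, hX₂col0, ← he]
  have hdX₃ : ∀ i j, e ∣ X₃ i j := fun i j => by
    rw [hX₃]; exact dvd_mul_left_entries hdX₂ _ i j
  have hX₃0succ : ∀ l : Fin n, X₃ 0 l.succ = 0 := fun l => by
    rw [hX₃0]; exact hX₂0succ l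
  have hfin : Lcol v * P₁ * A * (Q₁ * Trow w) = X₃ := by
    rw [hX₃, hX₂, hX]; simp only [Matrix.mul_assoc]
  refine ⟨Lcol v * P₁, Q₁ * Trow w, (isUnit_Lcol v).mul hP₁, hQ₁.mul (isUnit_Trow w),
    ?_, ?_, ?_⟩
  · intro j; rw [hfin]; exact hX₃0succ j
  · intro i; rw [hfin]; exact hX₃succ0 i
  · intro i j; rw [hfin, hX₃00]; exact hdX₃ i j


lemma edr_all (h : ∀ a : R, a ∉ Ideal.jacobson (⊥ : Ideal R) → Adequate a) [IsBezout R] :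
    ∀ (m n : ℕ) (A : Matrix (Fin m) (Fin n) R),
    ∃ (P : Matrix (Fin m) (Fin m) R) (Q : Matrix (Fin n) (Fin n) R),
    IsUnit P ∧ IsUnit Q ∧
    (∀ (i : Fin m) (j : Fin n), (i : ℕ) ≠ (j : ℕ) → (P * A * Q) i j = 0) ∧
    (∀ (i i' : Fin m) (j j' : Fin n), (i : ℕ) = (j : ℕ) → (i' : ℕ) = (j' : ℕ) →
      (i : ℕ) + 1 = (i' : ℕ) → (P * A * Q) i j ∣ (P * A * Q) i' j') := by
  intro m
  induction m with
  | zero =>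
    intro n A
    exact ⟨1, 1, isUnit_one, isUnit_one, fun i => i.elim0, fun i => i.elim0⟩
  | succ m IH =>
    intro n A
    rcases n with _ | n'
    · exact ⟨1, 1, isUnit_one, isUnit_one, fun i j => j.elim0, fun i i' j => j.elim0⟩
    · obtain ⟨P₁, Q₁, hP₁, hQ₁, hrow0, hcol0, hdvd⟩ := corner_clear h m n' A
      set B := P₁ * A * Q₁ with hB
      set B' : Matrix (Fin m) (Fin n') R := Matrix.of (fun i j => B i.succ j.succ) with hB'
      obtain ⟨P', Q', hP', hQ', hCz, hCd⟩ := IH n' B'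
      set C := P' * B' * Q' with hC
      set D := ext1 P' * B * ext1 Q' with hD
      have hfin : ext1 P' * P₁ * A * (Q₁ * ext1 Q') = D := by
        rw [hD, hB]; simp only [Matrix.mul_assoc]
      have hB₁0s : ∀ j : Fin n', (B * ext1 Q') 0 j.succ = 0 := by
        intro j; rw [mul_ext1_succ]
        refine Finset.sum_eq_zero (fun k _ => ?_)
        rw [hrow0 k, zero_mul]
      have hB₁col0 : ∀ i, (B * ext1 Q') i 0 = B i 0 := fun i => mul_ext1_zero _ _ _
      have hD00 : D 0 0 = B 0 0 := by
        rw [hD, Matrix.mul_assoc, ext1_mul_zero, hB₁col0]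
      have hD0s : ∀ j : Fin n', D 0 j.succ = 0 := by
        intro j; rw [hD, Matrix.mul_assoc, ext1_mul_zero]; exact hB₁0s j
      have hDs0 : ∀ i : Fin m, D i.succ 0 = 0 := by
        intro i; rw [hD, Matrix.mul_assoc, ext1_mul_succ]
        refine Finset.sum_eq_zero (fun k _ => ?_)
        rw [hB₁col0, hcol0 k, mul_zero]
      have hDss : ∀ (i : Fin m) (j : Fin n'), D i.succ j.succ = C i j := by
        intro i j
        have hrhs : C i j = ∑ k, P' i k * (B' * Q') k j := by
          rw [hC, Matrix.mul_assoc, Matrix.mul_apply]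
        rw [hD, Matrix.mul_assoc, ext1_mul_succ, hrhs]
        refine Finset.sum_congr rfl (fun k _ => ?_)
        rw [mul_ext1_succ, Matrix.mul_apply]
        rfl
      have hdvdC : ∀ i j, B 0 0 ∣ C i j := by
        have h1 : ∀ i j, B 0 0 ∣ B' i j := fun i j => hdvd i.succ j.succ
        have h2 : ∀ i j, B 0 0 ∣ (B' * Q') i j := dvd_mul_right_entries h1 Q'
        have h3 : ∀ i j, B 0 0 ∣ (P' * (B' * Q')) i j := dvd_mul_left_entries h2 P'
        intro i j; rw [hC, Matrix.mul_assoc]; exact h3 i j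
      have hDzero : ∀ (i : Fin (m+1)) (j : Fin (n'+1)), (i:ℕ) ≠ (j:ℕ) → D i j = 0 := by
        intro i
        refine Fin.cases ?_ (fun i₀ => ?_) i
        · intro j
          refine Fin.cases ?_ (fun j₀ => ?_) j
          · intro hij; simp at hij
          · intro _; exact hD0s j₀
        · intro j
          refine Fin.cases ?_ (fun j₀ => ?_) j
          · intro _; exact hDs0 i₀
          · intro hij
            rw [hDss]
            refine hCz i₀ j₀ ?_
            simpa using hij
      have hDdvd : ∀ (i i' : Fin (m+1)) (j j' : Fin (n'+1)), (i:ℕ) = (j:ℕ) → (i':ℕ) = (j':ℕ) → (i:ℕ)+1 = (i':ℕ) →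
          D i j ∣ D i' j' := by
        intro i i' j j'
        refine Fin.cases ?_ (fun i₀ => ?_) i
        · refine Fin.cases ?_ (fun j₀ => ?_) j
          · refine Fin.cases ?_ (fun i₁ => ?_) i'
            · intro _ _ hs; simp at hs
            · refine Fin.cases ?_ (fun j₁ => ?_) j'
              · intro _ hij' _; simp at hij'
              · intro _ _ _
                rw [hD00, hDss]
                exact hdvdC i₁ j₁
          · intro hij; simp at hij
        · refine Fin.cases ?_ (fun j₀ => ?_) j
          · intro hij; simp at hij
          · refine Fin.cases ?_ (fun i₁ => ?_) i'
            · intro _ _ hs; simp at hs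
            · refine Fin.cases ?_ (fun j₁ => ?_) j'
              · intro _ hij' _; simp at hij'
              · intro hij hij' hs
                rw [hDss, hDss]
                refine hCd i₀ i₁ j₀ j₁ ?_ ?_ ?_
                · simpa using hij
                · simpa using hij'
                · simpa using hs
      exact ⟨ext1 P' * P₁, Q₁ * ext1 Q', (isUnit_ext1 hP').mul hP₁,
        hQ₁.mul (isUnit_ext1 hQ'),
        fun i j hij => by rw [hfin]; exact hDzero i j hij,
        fun i i' j j' h1 h2 h3 => by rw [hfin]; exact hDdvd i i' j j' h1 h2 h3⟩

end EDRproof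

/-- If every element of `R` not in `J(R)` is adequate, then `R` is an elementary
divisor ring iff it is Bézout. -/


theorem stmt_10 (R : Type) [CommRing R]
    (h : ∀ a : R, a ∉ Ideal.jacobson (⊥ : Ideal R) → Adequate a) :
    ElementaryDivisorRing R ↔ IsBezout R := by
  constructor
  · intro hEDR
    rw [IsBezout.iff_span_pair_isPrincipal]
    intro x y
    obtain ⟨P, Q, hP, hQ, hz, _⟩ := hEDR 1 2 !![x, y]
    set B := P * !![x, y] * Q with hB
    have hB01 : B 0 1 = 0 := hz 0 1 (by decide)
    refine ⟨⟨B 0 0, ?_⟩⟩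
    have hdvd : ∀ (i : Fin 1) (j : Fin 2), B 0 0 ∣ !![x, y] i j := by
      refine EDRproof.dvd_all_of_unit_conj hP hQ ?_
      intro i j
      have hi : i = 0 := Fin.fin_one_eq_zero i
      subst hi
      induction j using EDRproof.fin2cases with
      | h0 => rw [← hB]
      | h1 => rw [← hB, hB01]; exact dvd_zero _
      | hs k => exact k.elim0
    apply le_antisymm
    · rw [Ideal.span_le]
      rintro z hz'
      simp only [Set.mem_insert_iff, Set.mem_singleton_iff] at hz'
      rcases hz' with rfl | rfl
      · exact Ideal.mem_span_singleton.mpr (by simpa using hdvd 0 0)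
      · exact Ideal.mem_span_singleton.mpr (by simpa using hdvd 0 1)
    · rw [Submodule.span_le, Set.singleton_subset_iff, SetLike.mem_coe, Ideal.mem_span_pair]
      refine ⟨P 0 0 * Q 0 0, P 0 0 * Q 1 0, ?_⟩
      rw [hB]
      simp [Matrix.mul_apply, Fin.sum_univ_two, Fin.sum_univ_one]
      ring
  · intro hBez
    intro m n A
    exact EDRproof.edr_all h m n A
end

section
/- Every VNL commutative ring is clean. -/
open Matrix

def IsCleanElem {R : Type*} [Ring R] (x : R) : Prop :=
  ∃ e u : R, IsIdempotentElem e ∧ IsUnit u ∧ x = e + u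

theorem IsCleanElem.of_one_sub {R : Type*} [Ring R] {x : R} (h : IsCleanElem (1 - x)) :
    IsCleanElem x := by
  obtain ⟨e, u, he, hu, hx⟩ := h
  refine ⟨1 - e, -u, he.one_sub, hu.neg, ?_⟩
  rw [← sub_sub_cancel 1 x, hx]
  abel

/- With `e = x * y` idempotent, `x + e - 1` acts as `x` (inverse `y`) on `eR` and as `-1` on
`(1 - e)R`, so it is a unit with inverse `e * y + e - 1`. -/
theorem isCleanElem_of_eq_mul_mul {R : Type*} [CommRing R] {x y : R} (h : x = x * y * x) :
    IsCleanElem x := by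
  have he : IsIdempotentElem (x * y) := by
    unfold IsIdempotentElem
    linear_combination (-y) * h
  refine ⟨1 - x * y, x + x * y - 1, he.one_sub, ?_, by ring⟩
  exact IsUnit.of_mul_eq_one (x * y * y + x * y - 1) (by linear_combination (-(y + 1) ^ 2) * h)

/-- Every VNL commutative ring is clean. -/
theorem stmt_15 (T : Type) [CommRing T] (h : IsVNLRing T) : IsCleanRing T := by
  intro x
  rcases h x with ⟨y, hx⟩ | ⟨y, hx⟩
  · exact isCleanElem_of_eq_mul_mul hx
  · exact (isCleanElem_of_eq_mul_mul hx).of_one_sub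
end

section
/- Let R be a commutative ring and T = { a ∈ R : R_a has stable range 1 }. Then T is a saturated multiplicatively closed subset of R. -/
open Matrix

/-!
`R_a` has stable range 1 exactly when `R ⧸ aR` does, and the latter can be phrased inside `R`:
whenever `aR + cR + dR = R`, some `c + d * y` is coprime to `a`. In this form saturation is
immediate, since an element coprime to `x * y` is coprime to `x`. For multiplicativity, first
choose `y₁` with `c + d * y₁` coprime to `x`, then solve modulo `y` for the pair
`(c + d * y₁, d * x)`: the correction `x * z` keeps coprimality to `x` and gains it to `y`.
-/

section StableRange1Mod

variable {R : Type*} [CommRing R]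

/-- `R ⧸ aR` has stable range 1, phrased without the quotient. -/
def StableRange1Mod (a : R) : Prop :=
  ∀ c d u v w : R, u * a + v * c + w * d = 1 → ∃ y : R, IsCoprime a (c + d * y)

theorem stableRange1Mod_one : StableRange1Mod (1 : R) :=
  fun _ _ _ _ _ _ => ⟨0, isCoprime_one_left⟩

theorem StableRange1Mod.mul {x y : R} (hx : StableRange1Mod x) (hy : StableRange1Mod y) :
    StableRange1Mod (x * y) := by
  intro c d u v w h
  obtain ⟨y₁, hx₁⟩ := hx c d (u * y) v w (by linear_combination h)
  have ⟨f, g, hfg⟩ := hx₁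
  -- `v * c + w * d = v * (c + d * y₁) + (w - v * y₁) * d`
  -- and `d = d * (f * x + g * (c + d * y₁))`
  obtain ⟨z, hz⟩ := hy (c + d * y₁) (d * x) (u * x) (v + (w - v * y₁) * d * g)
    ((w - v * y₁) * f) (by linear_combination h + (w - v * y₁) * d * hfg)
  refine ⟨y₁ + x * z, IsCoprime.mul_left ?_ ?_⟩
  · convert hx₁.add_mul_left_right (d * z) using 1; ring
  · convert hz using 1; ring

theorem StableRange1Mod.of_mul_right {x y : R} (hxy : StableRange1Mod (x * y)) :
    StableRange1Mod x := by
  intro c d u v w h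
  obtain ⟨z, hz⟩ := hxy c (w * d + u * x) 0 v 1 (by linear_combination h)
  refine ⟨w * z, ?_⟩
  have hx : IsCoprime x (c + d * (w * z) + x * (u * z)) := by
    convert hz.of_mul_left_left using 1; ring
  exact IsCoprime.add_mul_left_right_iff.mp hx

theorem StableRange1Mod.of_mul_left {x y : R} (hxy : StableRange1Mod (x * y)) :
    StableRange1Mod y :=
  StableRange1Mod.of_mul_right (mul_comm x y ▸ hxy)

end StableRange1Mod

namespace Sa

variable {R : Type} [CommRing R] {a : R}
  {S : Type} [CommRing S] [Algebra R S] [IsLocalization (Sa R a) S]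

theorem isUnit_algebraMap_iff {x : R} : IsUnit (algebraMap R S x) ↔ IsCoprime a x := by
  rw [IsLocalization.algebraMap_isUnit_iff (Sa R a)]
  exact ⟨fun ⟨_, hm, hxm⟩ => IsCoprime.of_isCoprime_of_dvd_right hm hxm,
    fun h => ⟨x, h, dvd_rfl⟩⟩

theorem exists_eq_one_of_isCoprime_algebraMap {c d : R}
    (h : IsCoprime (algebraMap R S c) (algebraMap R S d)) :
    ∃ u v w : R, u * a + v * c + w * d = 1 := by
  obtain ⟨X, Y, hXY⟩ := h
  obtain ⟨v, w, m, hv, hw⟩ := IsLocalization.surj₂ (Sa R a) S X Y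
  have halg : algebraMap R S (v * c + w * d) = algebraMap R S m := by
    simp only [map_add, map_mul, ← hv, ← hw]
    linear_combination (algebraMap R S m) * hXY
  obtain ⟨e, he⟩ := IsLocalization.exists_of_eq (M := Sa R a) halg
  obtain ⟨f, g, hfg⟩ : IsCoprime a (e * m) := e.2.mul_right m.2
  exact ⟨f, g * e * v, g * e * w, by linear_combination hfg + g * he⟩

theorem stableRange1Mod_of_stableRange1 (h : StableRange1 S) : StableRange1Mod a := by
  intro c d u v w huvw
  have hunit : IsUnit (algebraMap R S (v * c + w * d)) :=
    isUnit_algebraMap_iff (a := a) |>.mpr ⟨u, 1, by linear_combination huvw⟩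
  obtain ⟨Y, hY⟩ := h (algebraMap R S c) (algebraMap R S d) <| by
    obtain ⟨i, hi⟩ := hunit.exists_right_inv
    refine ⟨algebraMap R S v * i, algebraMap R S w * i, ?_⟩
    rw [← hi, map_add, map_mul, map_mul]
    ring
  obtain ⟨r, s, rfl⟩ := IsLocalization.exists_mk'_eq (Sa R a) Y
  have hcs : IsCoprime a (c * s + d * r) := by
    rw [← isUnit_algebraMap_iff (S := S), map_add, map_mul, map_mul,
      ← IsLocalization.mk'_spec S r s, ← mul_assoc, ← add_mul]
    exact hY.mul (IsLocalization.map_units S s)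
  -- `g` inverts `s` modulo `a`
  obtain ⟨f, g, hfg⟩ : IsCoprime a s := s.2
  refine ⟨g * r, ?_⟩
  have hg : IsCoprime a g := ⟨f, s, by linear_combination hfg⟩
  convert (hg.mul_right hcs).add_mul_left_right (f * c) using 1
  linear_combination (-c) * hfg

theorem stableRange1_of_stableRange1Mod (h : StableRange1Mod a) : StableRange1 S := by
  intro C D hCD
  obtain ⟨r, s, rfl⟩ := IsLocalization.exists_mk'_eq (Sa R a) C
  obtain ⟨t, w, rfl⟩ := IsLocalization.exists_mk'_eq (Sa R a) D
  have hrt : IsCoprime (algebraMap R S r) (algebraMap R S t) := by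
    rw [← IsLocalization.mk'_spec S r s, ← IsLocalization.mk'_spec S t w]
    exact (isCoprime_mul_units_right (IsLocalization.map_units S s)
      (IsLocalization.map_units S w) _ _).mpr hCD
  obtain ⟨u, v, v', huv⟩ := exists_eq_one_of_isCoprime_algebraMap (a := a) hrt
  obtain ⟨y, hy⟩ := h r t u v v' huv
  refine ⟨IsLocalization.mk' S (w * y : R) s,
    isUnit_of_mul_isUnit_left (y := algebraMap R S s) ?_⟩
  have key : (IsLocalization.mk' S r s + IsLocalization.mk' S t w *
      IsLocalization.mk' S (w * y : R) s) * algebraMap R S s = algebraMap R S (r + t * y) := by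
    rw [add_mul, mul_assoc, IsLocalization.mk'_spec, IsLocalization.mk'_spec, map_mul,
      ← mul_assoc, IsLocalization.mk'_spec, map_add, map_mul]
  rw [key]
  exact isUnit_algebraMap_iff.mpr hy

theorem stableRange1_iff_stableRange1Mod : StableRange1 S ↔ StableRange1Mod a :=
  ⟨stableRange1Mod_of_stableRange1, stableRange1_of_stableRange1Mod⟩

end Sa

/-- `T = { a | R_a has stable range 1 }` is a saturated multiplicatively closed
subset of `R`. -/
theorem stmt_17 (R : Type) [CommRing R] :
    (1 : R) ∈ {a : R | StableRange1 (Localization (Sa R a))} ∧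
    (∀ x ∈ {a : R | StableRange1 (Localization (Sa R a))},
      ∀ y ∈ {a : R | StableRange1 (Localization (Sa R a))},
        x * y ∈ {a : R | StableRange1 (Localization (Sa R a))}) ∧
    (∀ x y : R, x * y ∈ {a : R | StableRange1 (Localization (Sa R a))} →
      x ∈ {a : R | StableRange1 (Localization (Sa R a))} ∧
      y ∈ {a : R | StableRange1 (Localization (Sa R a))}) := by
  have hmod (a : R) : StableRange1 (Localization (Sa R a)) ↔ StableRange1Mod a :=
    Sa.stableRange1_iff_stableRange1Mod
  simp only [Set.mem_ofPred_eq, hmod]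
  exact ⟨stableRange1Mod_one, fun _ hx _ hy => hx.mul hy,
    fun _ _ hxy => ⟨hxy.of_mul_right, hxy.of_mul_left⟩⟩
end

section
/- The product of two adequate elements of a commutative Bézout ring is adequate; consequently, the set S of adequate elements is multiplicatively closed. -/
open Matrix

/-- In a commutative Bézout ring, the product of two adequate elements is
adequate; consequently the set of adequate elements is multiplicatively closed
(and contains `1`). -/
theorem stmt_19 (R : Type) [CommRing R] [IsBezout R] :
    (∀ c d : R, Adequate c → Adequate d → Adequate (c * d)) ∧
    (1 : R) ∈ {a : R | Adequate a} ∧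
    ∀ x ∈ {a : R | Adequate a}, ∀ y ∈ {a : R | Adequate a},
      x * y ∈ {a : R | Adequate a} := by
  have hmul : ∀ c d : R, Adequate c → Adequate d → Adequate (c * d) := by
    intro c d hc hd a
    obtain ⟨r1, s1, hc1, hr1, hs1⟩ := hc a
    obtain ⟨r2, s2, hd1, hr2, hs2⟩ := hd a
    refine ⟨r1 * r2, s1 * s2, by rw [hc1, hd1]; ring, hr1.mul_left hr2, ?_⟩
    intro s' hdvd hnu hcop
    have hgl := IsBezout.gcd_dvd_left s' s1
    have hgr := IsBezout.gcd_dvd_right s' s1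
    have hgu : IsUnit (IsBezout.gcd s' s1) := by
      by_contra hgu
      exact hs1 _ hgr hgu (hcop.of_isCoprime_of_dvd_left hgl)
    have hcop1 : IsCoprime s' s1 := by
      obtain ⟨p, q, hpq⟩ := IsBezout.gcd_eq_sum s' s1
      obtain ⟨u, hu⟩ := hgu
      obtain ⟨v, hv⟩ := u.isUnit.exists_left_inv
      exact ⟨v * p, v * q, by rw [mul_assoc, mul_assoc, ← mul_add, hpq, ← hu, hv]⟩
    exact hs2 _ (hcop1.dvd_of_dvd_mul_left hdvd) hnu hcop
  refine ⟨hmul, ?_, fun x hx y hy => hmul x y hx hy⟩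
  intro a
  exact ⟨1, 1, (one_mul 1).symm, isCoprime_one_left, fun s' hd hnu _ =>
    hnu (isUnit_of_dvd_one hd)⟩
end
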